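/- arXiv:1409.8673 — 2 statements merged into one kernel-verified Lean document; each statement's English description precedes it below -/
import Mathlib

section
/- Shu's recurrence for higher-order DQ weights holds for Lagrange-interpolation-based weights: for distinct nodes x_1,...,x_N and weights w_{ij}^{(r)} defined as the r-th derivative at x_i of the j-th Lagrange basis polynomial, one has for i ≠ j: w_{ij}^{(r)} = r( w_{ij}^{(1)} w_{ii}^{(r-1)} - w_{ij}^{(r-1)}/(x_i - x_j) ), for 2 ≤ r ≤ N-1. -/
open Finset Polynomial

private lemma iter_deriv_X_sub_C_mul (c : ℝ) (p : ℝ[X]) :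
    ∀ m : ℕ, (Polynomial.derivative (R := ℝ))^[m+1] ((X - C c) * p)
      = (X - C c) * (Polynomial.derivative (R := ℝ))^[m+1] p
        + C ((m:ℝ)+1) * (Polynomial.derivative (R := ℝ))^[m] p := by
  intro m
  induction m with
  | zero =>
    simp [derivative_mul]
    ring
  | succ n ih =>
    rw [Function.iterate_succ_apply', ih]
    simp [derivative_mul]
    simp only [← Function.iterate_succ_apply', Function.iterate_succ_apply]
    ring

private lemma key_eval (c a : ℝ) (p : ℝ[X]) (m : ℕ) :
    (((Polynomial.derivative (R := ℝ))^[m+1] ((X - C c) * p)).eval a)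
      = (a - c) * ((Polynomial.derivative (R := ℝ))^[m+1] p).eval a
        + ((m:ℝ)+1) * ((Polynomial.derivative (R := ℝ))^[m] p).eval a := by
  rw [iter_deriv_X_sub_C_mul]
  simp

private lemma basis_mul_eq (N : ℕ) (x : Fin N → ℝ) (j : Fin N) :
    (X - C (x j)) * Lagrange.basis Finset.univ x j
      = C (Lagrange.nodalWeight Finset.univ x j) * Lagrange.nodal Finset.univ x := by
  rw [Lagrange.basis_eq_prod_sub_inv_mul_nodal_div (mem_univ j),
    ← Lagrange.nodal_erase_eq_nodal_div (mem_univ j),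
    Lagrange.nodal_eq_mul_nodal_erase (mem_univ j)]
  ring

theorem stmt12 (N : ℕ) (x : Fin N → ℝ) (hx : Function.Injective x)
    (w : ℕ → Fin N → Fin N → ℝ)
    (hw : ∀ (r : ℕ) (i j : Fin N),
      w r i j = ((Polynomial.derivative (R := ℝ))^[r]
        (Lagrange.basis Finset.univ x j)).eval (x i))
    (r : ℕ) (hr2 : 2 ≤ r) (hrN : r ≤ N - 1) (i j : Fin N) (hij : i ≠ j) :
    w r i j = r * (w 1 i j * w (r-1) i i - w (r-1) i j / (x i - x j)) := by
  obtain ⟨m, rfl⟩ : ∃ m, r = m + 1 := ⟨r - 1, (Nat.succ_pred_eq_of_pos (by omega)).symm⟩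
  have hm : m + 1 - 1 = m := rfl
  rw [hm]
  set cj := Lagrange.nodalWeight Finset.univ x j with hcj
  set ci := Lagrange.nodalWeight Finset.univ x i with hci
  set M := Lagrange.nodal Finset.univ x with hM
  have hxij : x i - x j ≠ 0 := sub_ne_zero_of_ne (fun h => hij (hx h))
  have hinj : Set.InjOn x (Finset.univ : Finset (Fin N)) := fun a _ b _ h => hx h
  have hEj : ∀ n : ℕ, (x i - x j) * w (n+1) i j + ((n:ℝ)+1) * w n i j
      = cj * (((Polynomial.derivative (R := ℝ))^[n+1] M).eval (x i)) := by
    intro n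
    have h1 := congrArg (fun p => (((Polynomial.derivative (R := ℝ))^[n+1] p).eval (x i)))
      (basis_mul_eq N x j)
    simp only [key_eval, Polynomial.iterate_derivative_C_mul, eval_mul, eval_C] at h1
    rw [hw (n+1) i j, hw n i j]
    exact h1
  have hEi : ∀ n : ℕ, ((n:ℝ)+1) * w n i i
      = ci * (((Polynomial.derivative (R := ℝ))^[n+1] M).eval (x i)) := by
    intro n
    have h1 := congrArg (fun p => (((Polynomial.derivative (R := ℝ))^[n+1] p).eval (x i)))
      (basis_mul_eq N x i)
    simp only [key_eval, Polynomial.iterate_derivative_C_mul, eval_mul, eval_C,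
      sub_self, zero_mul, zero_add] at h1
    rw [hw n i i]
    exact h1
  have hw0ij : w 0 i j = 0 := by
    rw [hw]; simpa using Lagrange.eval_basis_of_ne hij.symm (mem_univ i)
  have hw0ii : w 0 i i = 1 := by
    rw [hw]; simpa using Lagrange.eval_basis_self hinj (mem_univ i)
  have hC : (x i - x j) * w 1 i j
      = cj * (((Polynomial.derivative (R := ℝ))^[0+1] M).eval (x i)) := by
    have h := hEj 0
    rw [hw0ij] at h
    simpa using h
  have hDd : (1:ℝ) = ci * (((Polynomial.derivative (R := ℝ))^[0+1] M).eval (x i)) := by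
    have h := hEi 0
    rw [hw0ii] at h
    simpa using h
  have hA := hEj m
  have hB := hEi m
  set E := ((Polynomial.derivative (R := ℝ))^[m+1] M).eval (x i) with hE
  set E1 := ((Polynomial.derivative (R := ℝ))^[0+1] M).eval (x i) with hE1
  have hfin : (x i - x j) * w (m+1) i j + ((m:ℝ)+1) * w m i j
      = ((m:ℝ)+1) * w m i i * ((x i - x j) * w 1 i j) := by
    calc (x i - x j) * w (m+1) i j + ((m:ℝ)+1) * w m i j = cj * E := hA
      _ = (cj * E) * (ci * E1) := by rw [← hDd]; ring
      _ = (ci * E) * (cj * E1) := by ring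
      _ = ((m:ℝ)+1) * w m i i * ((x i - x j) * w 1 i j) := by rw [← hB, ← hC]
  have hgoal : w (m+1) i j = ((m:ℝ)+1) * (w 1 i j * w m i i - w m i j / (x i - x j)) := by
    field_simp
    linarith [hfin]
  rw [hgoal]
  push_cast
  ring
end

section
/- If the forward Euler step is strongly stable in a norm ‖·‖ (i.e., ‖u + Δt F(u)‖ ≤ ‖u‖ for all u and all 0 < Δt ≤ Δt_FE), then any Runge–Kutta method written as a convex combination of forward Euler steps with coefficients α_{ik} ≥ 0, ∑_k α_{ik} = 1 and step sizes (β_{ik}/α_{ik})Δt ≤ Δt_FE is also strongly stable: ‖u^{n+1}‖ ≤ ‖u^n‖. -/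
open Finset

theorem stmt17 (E : Type*) [NormedAddCommGroup E] [NormedSpace ℝ E]
    (F : E → E) (ΔtFE : ℝ) (hΔtFE : 0 < ΔtFE)
    (hFE : ∀ u : E, ∀ τ : ℝ, 0 < τ → τ ≤ ΔtFE → ‖u + τ • F u‖ ≤ ‖u‖)
    (m : ℕ) (hm : 0 < m) (α β : ℕ → ℕ → ℝ)
    (hα : ∀ i k, 0 ≤ α i k) (hβ : ∀ i k, 0 ≤ β i k)
    (hsum : ∀ i, 1 ≤ i → i ≤ m → (∑ k ∈ Finset.range i, α i k) = 1)
    (Δt : ℝ) (hΔt : 0 < Δt)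
    (hratio : ∀ i k, k < i → i ≤ m →
      (α i k = 0 → β i k = 0) ∧ (α i k ≠ 0 → (β i k / α i k) * Δt ≤ ΔtFE))
    (U : ℕ → E)
    (hstage : ∀ i, 1 ≤ i → i ≤ m →
      U i = ∑ k ∈ Finset.range i, (α i k • U k + (Δt * β i k) • F (U k))) :
    ‖U m‖ ≤ ‖U 0‖ := by
  suffices h : ∀ i, i ≤ m → ‖U i‖ ≤ ‖U 0‖ from h m le_rfl
  intro i
  induction i using Nat.strong_induction_on with
  | _ i ih =>
    intro him
    rcases Nat.eq_zero_or_pos i with h0 | h1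
    · subst h0; exact le_rfl
    · rw [hstage i h1 him]
      calc ‖∑ k ∈ Finset.range i, (α i k • U k + (Δt * β i k) • F (U k))‖
          ≤ ∑ k ∈ Finset.range i, ‖α i k • U k + (Δt * β i k) • F (U k)‖ :=
            norm_sum_le _ _
        _ ≤ ∑ k ∈ Finset.range i, α i k * ‖U 0‖ := by
            apply Finset.sum_le_sum
            intro k hk
            have hki : k < i := Finset.mem_range.mp hk
            have hk0 : ‖U k‖ ≤ ‖U 0‖ := ih k hki (le_of_lt (lt_of_lt_of_le hki him))
            rcases eq_or_lt_of_le (hα i k) with ha0 | hapos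
            · have hb0 : β i k = 0 := (hratio i k hki him).1 ha0.symm
              rw [← ha0, hb0, zero_smul, mul_zero, zero_smul, add_zero, norm_zero,
                zero_mul]
            · rcases eq_or_lt_of_le (hβ i k) with hb0 | hbpos
              · rw [← hb0, mul_zero, zero_smul, add_zero, norm_smul,
                  Real.norm_eq_abs, abs_of_pos hapos]
                exact mul_le_mul_of_nonneg_left hk0 (le_of_lt hapos)
              · set τ : ℝ := (β i k / α i k) * Δt with hτ
                have hτpos : 0 < τ := by
                  apply mul_pos (div_pos hbpos hapos) hΔt
                have hτle : τ ≤ ΔtFE := (hratio i k hki him).2 (ne_of_gt hapos)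
                have hrw : α i k • U k + (Δt * β i k) • F (U k)
                    = α i k • (U k + τ • F (U k)) := by
                  rw [smul_add, smul_smul, hτ]
                  congr 2
                  field_simp
                rw [hrw, norm_smul, Real.norm_eq_abs, abs_of_pos hapos]
                exact mul_le_mul_of_nonneg_left
                  (le_trans (hFE (U k) τ hτpos hτle) hk0) (le_of_lt hapos)
        _ = ‖U 0‖ := by rw [← Finset.sum_mul, hsum i h1 him, one_mul]
end
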